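/- (Tail bound for the k-th eigenvalue of a single random Hermitian matrix) Let X be a random n×n complex Hermitian matrix (defined on a probability space, with all relevant expectations finite), let k ∈ {1,…,n}, and let θ ∈ ℝ. Then Pr(λ_k(X) ≥ θ) ≤ inf_{t>0} min_V [ e^{−tθ} · E Tr exp( t · V^H X V ) ], where the minimum is over all n×(n−k+1) complex matrices V with V^H V = I_{n−k+1}. -/

import Mathlib

open Matrix MeasureTheory ProbabilityTheory

/-- The `k`-th largest element (1-indexed) of the values of `f : Fin n → ℝ`,
counted with multiplicity. -/
noncomputable def kthLargest {n : ℕ} (f : Fin n → ℝ) (k : ℕ) : ℝ :=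
  (Multiset.sort (Finset.univ.val.map f) (· ≤ ·)).getD (n - k) 0

/-- The `k`-th largest eigenvalue (1-indexed, non-increasing order, with multiplicity)
of a Hermitian matrix; junk value `0` for non-Hermitian matrices. -/
noncomputable def eigvalDesc {n : ℕ} (A : Matrix (Fin n) (Fin n) ℂ) (k : ℕ) : ℝ :=
  if h : A.IsHermitian then kthLargest h.eigenvalues k else 0

/-- The matrix exponential. -/
noncomputable def matExp {n : ℕ} (A : Matrix (Fin n) (Fin n) ℂ) : Matrix (Fin n) (Fin n) ℂ :=
  NormedSpace.exp A


/-!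
If `λ_k(A) ≥ θ`, the span of the eigenvectors of `A` for its `k` largest eigenvalues and the range
of an isometry `V` with `n - k + 1` columns meet nontrivially, since `k + (n - k + 1) > n`. A unit
vector `V z` in the intersection has `⟪z, Vᴴ A V z⟫ = ⟪V z, A V z⟫ ≥ θ`, so some eigenvalue of
`Vᴴ A V` is at least `θ`, and then `Tr exp (t Vᴴ A V) ≥ exp (t θ)`. Applied to `A = X ω`, this says
that `Tr exp (t Vᴴ X V) ≥ exp (t θ)` on the event `{λ_k(X) ≥ θ}`, and Markov's inequality bounds
its probability by `exp (-t θ) E Tr exp (t Vᴴ X V)` for every `t > 0` and every isometry `V`.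
-/

open Finset

theorem le_card_filter_kthLargest_le {n k : ℕ} (f : Fin n → ℝ) (hk1 : 1 ≤ k) (hkn : k ≤ n) :
    k ≤ #{i | kthLargest f k ≤ f i} := by
  set l := Multiset.sort (univ.val.map f) (· ≤ ·)
  have hidx : n - k < l.length := by simp [l]; omega
  have hsorted := (Multiset.pairwise_sort (univ.val.map f) (· ≤ ·)).sublist
    (List.drop_sublist (n - k) l)
  rw [List.drop_eq_getElem_cons hidx, List.pairwise_cons] at hsorted
  have hge : ∀ x ∈ l.drop (n - k), kthLargest f k ≤ x := by
    rw [kthLargest, List.getD_eq_getElem _ _ hidx, List.drop_eq_getElem_cons hidx]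
    rintro x (_ | ⟨_, hx⟩)
    exacts [le_rfl, hsorted.1 x hx]
  calc k = (l.drop (n - k)).countP (kthLargest f k ≤ ·) := by
        rw [List.countP_eq_length.2 (by simpa using hge), List.length_drop]; simp [l]; omega
    _ ≤ l.countP (kthLargest f k ≤ ·) := (List.drop_sublist _ _).countP_le
    _ = (univ.val.map f).countP (kthLargest f k ≤ ·) := by
        rw [← Multiset.coe_countP, Multiset.sort_eq]
    _ = #{i | kthLargest f k ≤ f i} := by
        rw [Multiset.countP_map]; rfl

namespace Matrix

theorem conjTranspose_mul_self_one_submatrix {m n R : Type*} [Fintype n] [DecidableEq m]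
    [DecidableEq n] [Semiring R] [StarRing R] (e : m ↪ n) :
    ((1 : Matrix n n R).submatrix id e)ᴴ * (1 : Matrix n n R).submatrix id e = 1 := by
  rw [conjTranspose_submatrix, conjTranspose_one, ← submatrix_mul _ _ _ _ _ Function.bijective_id,
    Matrix.one_mul, submatrix_one_embedding]

variable {n m : Type*} [Fintype n]

theorem re_star_dotProduct_self (w : n → ℂ) : (star w ⬝ᵥ w).re = ∑ i, Complex.normSq (w i) := by
  simp [dotProduct, Complex.re_sum, Complex.normSq_apply]

theorem re_star_dotProduct_diagonal_mulVec [DecidableEq n] (d : n → ℝ) (w : n → ℂ) :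
    (star w ⬝ᵥ diagonal (fun i => (d i : ℂ)) *ᵥ w).re = ∑ i, d i * Complex.normSq (w i) := by
  simp only [dotProduct, mulVec_diagonal, Complex.re_sum, Complex.normSq_apply]
  refine sum_congr rfl fun i _ => ?_
  simp
  ring

theorem conjTranspose_mul_self_star_mul_of_mem_unitary [DecidableEq n] {U : Matrix n n ℂ}
    (hU : U ∈ unitary (Matrix n n ℂ)) (V : Matrix n m ℂ) :
    (star U * V)ᴴ * (star U * V) = Vᴴ * V := by
  rw [conjTranspose_mul, Matrix.mul_assoc, ← Matrix.mul_assoc _ (star U), star_eq_conjTranspose,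
    conjTranspose_conjTranspose, ← star_eq_conjTranspose, Unitary.mul_star_self_of_mem hU,
    Matrix.one_mul]

variable [Fintype m]

theorem star_dotProduct_conjTranspose_mul_mul_mulVec (M : Matrix n m ℂ) (A : Matrix n n ℂ)
    (z : m → ℂ) : star z ⬝ᵥ (Mᴴ * A * M) *ᵥ z = star (M *ᵥ z) ⬝ᵥ A *ᵥ (M *ᵥ z) := by
  simp only [star_mulVec, dotProduct_mulVec, vecMul_vecMul, Matrix.mul_assoc]

theorem star_mulVec_dotProduct_mulVec_of_isometry [DecidableEq m] {M : Matrix n m ℂ}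
    (hM : Mᴴ * M = 1) (z : m → ℂ) : star (M *ᵥ z) ⬝ᵥ M *ᵥ z = star z ⬝ᵥ z := by
  rw [star_mulVec, ← dotProduct_mulVec, mulVec_mulVec, hM, one_mulVec]

theorem exists_ne_zero_mulVec_eq_zero_of_card_lt {K : Type*} [Field K] (M : Matrix n m K)
    {S : Finset n} (hcard : Fintype.card n < #S + Fintype.card m) :
    ∃ z ≠ 0, ∀ i ∉ S, (M *ᵥ z) i = 0 := by
  classical
  let restrict : (n → K) →ₗ[K] ({i // i ∉ S} → K) := LinearMap.funLeft K K Subtype.val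
  have hker : LinearMap.ker (restrict ∘ₗ M.mulVecLin) ≠ ⊥ := by
    refine LinearMap.ker_ne_bot_of_finrank_lt ?_
    rw [Module.finrank_fintype_fun_eq_card, Module.finrank_fintype_fun_eq_card,
      Fintype.card_subtype_compl, Fintype.card_coe]
    have := S.card_le_univ
    omega
  obtain ⟨z, hz, hz0⟩ := Submodule.exists_mem_ne_zero_of_ne_bot hker
  exact ⟨z, hz0, fun i hi => congrFun hz ⟨i, hi⟩⟩

namespace IsHermitian

variable [DecidableEq n] {A : Matrix n n ℂ} (hA : A.IsHermitian)
include hA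

theorem star_dotProduct_mulVec_eq_diagonal (z : n → ℂ) :
    star z ⬝ᵥ A *ᵥ z =
      star (star (hA.eigenvectorUnitary : Matrix n n ℂ) *ᵥ z) ⬝ᵥ
        diagonal (fun i => (hA.eigenvalues i : ℂ)) *ᵥ
          (star (hA.eigenvectorUnitary : Matrix n n ℂ) *ᵥ z) := by
  rw [← star_dotProduct_conjTranspose_mul_mul_mulVec]
  conv_lhs => rw [hA.spectral_theorem]
  simp [Unitary.conjStarAlgAut_apply, star_eq_conjTranspose, Function.comp_def]

theorem exists_le_eigenvalues_of_mul_re_le {z : n → ℂ} (hz : z ≠ 0) {θ : ℝ}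
    (h : θ * (star z ⬝ᵥ z).re ≤ (star z ⬝ᵥ A *ᵥ z).re) : ∃ i, θ ≤ hA.eigenvalues i := by
  have hU := conjTranspose_mul_self_star_mul_of_mem_unitary hA.eigenvectorUnitary.2
    (1 : Matrix n n ℂ)
  simp only [Matrix.mul_one, conjTranspose_one] at hU
  have hc : star (hA.eigenvectorUnitary : Matrix n n ℂ) *ᵥ z ≠ 0 := fun h0 => hz <| by
    rw [← one_mulVec z, ← Unitary.mul_star_self_of_mem hA.eigenvectorUnitary.2, ← mulVec_mulVec,
      h0, mulVec_zero]
  rw [hA.star_dotProduct_mulVec_eq_diagonal, re_star_dotProduct_diagonal_mulVec,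
    ← star_mulVec_dotProduct_mulVec_of_isometry hU, re_star_dotProduct_self, mul_sum] at h
  by_contra! hlt
  obtain ⟨i, hi⟩ := Function.ne_iff.1 hc
  refine h.not_gt (sum_lt_sum (fun j _ => ?_) ⟨i, mem_univ i, ?_⟩)
  · exact mul_le_mul_of_nonneg_right (hlt j).le (Complex.normSq_nonneg _)
  · exact mul_lt_mul_of_pos_right (hlt i) (Complex.normSq_pos.2 hi)

theorem exists_le_eigenvalues_conjTranspose_mul_mul [DecidableEq m] {V : Matrix n m ℂ}
    (hV : Vᴴ * V = 1) {S : Finset n} {θ : ℝ} (hS : ∀ i ∈ S, θ ≤ hA.eigenvalues i)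
    (hcard : Fintype.card n < #S + Fintype.card m) :
    ∃ j, θ ≤ (isHermitian_conjTranspose_mul_mul V hA).eigenvalues j := by
  have hM := conjTranspose_mul_self_star_mul_of_mem_unitary hA.eigenvectorUnitary.2 V
  rw [hV] at hM
  -- `V z` lies in the span of the eigenvectors of `A` indexed by `S`.
  obtain ⟨z, hz, hzS⟩ := exists_ne_zero_mulVec_eq_zero_of_card_lt
    (star (hA.eigenvectorUnitary : Matrix n n ℂ) * V) hcard
  refine (isHermitian_conjTranspose_mul_mul V hA).exists_le_eigenvalues_of_mul_re_le hz ?_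
  rw [star_dotProduct_conjTranspose_mul_mul_mulVec, hA.star_dotProduct_mulVec_eq_diagonal,
    mulVec_mulVec, re_star_dotProduct_diagonal_mulVec,
    ← star_mulVec_dotProduct_mulVec_of_isometry hM, re_star_dotProduct_self, mul_sum]
  refine sum_le_sum fun i _ => ?_
  by_cases hi : i ∈ S
  · exact mul_le_mul_of_nonneg_right (hS i hi) (Complex.normSq_nonneg _)
  · simp [hzS i hi]

theorem re_trace_exp_smul (t : ℝ) :
    (trace (NormedSpace.exp (t • A))).re = ∑ i, Real.exp (t * hA.eigenvalues i) := by
  let U := Unitary.toUnits hA.eigenvectorUnitary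
  have hdiag : t • A = U * diagonal (fun i => ((t * hA.eigenvalues i : ℝ) : ℂ)) *
      (U⁻¹ : (Matrix n n ℂ)ˣ) := by
    have hD : diagonal (fun i => ((t * hA.eigenvalues i : ℝ) : ℂ)) =
        t • diagonal (RCLike.ofReal ∘ hA.eigenvalues) := by
      rw [← diagonal_smul]
      congr 1
      ext i
      simp
    rw [hD, Matrix.mul_smul, Matrix.smul_mul]
    congr 1
    simpa [U] using hA.spectral_theorem
  rw [hdiag, exp_units_conj, trace_units_conj, exp_diagonal, trace_diagonal, Complex.re_sum]
  refine sum_congr rfl fun i _ => ?_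
  rw [Pi.coe_exp, ← Complex.exp_eq_exp_ℂ, ← Complex.ofReal_exp, Complex.ofReal_re]

theorem re_trace_exp_smul_nonneg (t : ℝ) : 0 ≤ (trace (NormedSpace.exp (t • A))).re := by
  rw [hA.re_trace_exp_smul]
  positivity

theorem exp_mul_eigenvalues_le_re_trace_exp_smul (t : ℝ) (i : n) :
    Real.exp (t * hA.eigenvalues i) ≤ (trace (NormedSpace.exp (t • A))).re := by
  rw [hA.re_trace_exp_smul]
  exact single_le_sum (f := fun j => Real.exp (t * hA.eigenvalues j))
    (fun j _ => (Real.exp_pos _).le) (mem_univ i)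

end IsHermitian

theorem IsHermitian.exists_eigvalDesc_le_eigenvalues_conjTranspose_mul_mul {n k m : ℕ}
    {A : Matrix (Fin n) (Fin n) ℂ} (hA : A.IsHermitian) (hk1 : 1 ≤ k) (hkn : k ≤ n)
    {V : Matrix (Fin n) (Fin m) ℂ} (hV : Vᴴ * V = 1) (hm : n < k + m) :
    ∃ j, eigvalDesc A k ≤ (isHermitian_conjTranspose_mul_mul V hA).eigenvalues j := by
  rw [eigvalDesc, dif_pos hA]
  refine hA.exists_le_eigenvalues_conjTranspose_mul_mul hV
    (S := {i | kthLargest hA.eigenvalues k ≤ hA.eigenvalues i}) (fun i hi => (mem_filter.1 hi).2) ?_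
  have := le_card_filter_kthLargest_le hA.eigenvalues hk1 hkn
  simp only [Fintype.card_fin]
  omega

end Matrix

theorem measureReal_le_inv_mul_integral {Ω : Type*} [MeasurableSpace Ω] {μ : Measure Ω}
    [IsFiniteMeasure μ] {f : Ω → ℝ} (hf_nonneg : 0 ≤ᵐ[μ] f) (hf : Integrable f μ) {ε : ℝ}
    (hε : 0 < ε) {S : Set Ω} (hS : ∀ ω ∈ S, ε ≤ f ω) : μ.real S ≤ ε⁻¹ * ∫ ω, f ω ∂μ := by
  rw [le_inv_mul_iff₀ hε]
  exact (mul_le_mul_of_nonneg_left (measureReal_mono hS) hε.le).trans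
    (mul_meas_ge_le_integral_of_nonneg hf_nonneg hf ε)

/-- Tail bound for the k-th eigenvalue of a single random Hermitian matrix:
`Pr(λ_k(X) ≥ θ) ≤ inf_{t>0} min_{VᴴV = I} e^{−tθ} · E Tr exp(t · Vᴴ X V)`. -/
theorem tail_bound_kth_eigenvalue_single {Ω : Type*} [MeasurableSpace Ω]
    (μ : Measure Ω) [IsProbabilityMeasure μ]
    {n : ℕ} (X : Ω → Matrix (Fin n) (Fin n) ℂ) (hX : ∀ ω, (X ω).IsHermitian)
    (k : ℕ) (hk1 : 1 ≤ k) (hkn : k ≤ n) (θ : ℝ)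
    (hInt : ∀ t : ℝ, 0 < t → ∀ V : Matrix (Fin n) (Fin (n - k + 1)) ℂ, Vᴴ * V = 1 →
      Integrable (fun ω => (Matrix.trace (matExp (t • (Vᴴ * X ω * V)))).re) μ) :
    μ {ω | θ ≤ eigvalDesc (X ω) k} ≤
      ENNReal.ofReal (⨅ t : {t : ℝ // 0 < t},
        ⨅ V : {V : Matrix (Fin n) (Fin (n - k + 1)) ℂ // Vᴴ * V = 1},
          Real.exp (-(t : ℝ) * θ) *
            ∫ ω, (Matrix.trace (matExp ((t : ℝ) •
              ((V : Matrix (Fin n) (Fin (n - k + 1)) ℂ)ᴴ * X ω *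
                (V : Matrix (Fin n) (Fin (n - k + 1)) ℂ))))).re ∂μ) := by
  have : Nonempty {t : ℝ // 0 < t} := ⟨⟨1, one_pos⟩⟩
  have : Nonempty {V : Matrix (Fin n) (Fin (n - k + 1)) ℂ // Vᴴ * V = 1} :=
    ⟨⟨_, conjTranspose_mul_self_one_submatrix (Fin.castLEEmb (by omega))⟩⟩
  rw [← ofReal_measureReal]
  refine ENNReal.ofReal_le_ofReal (le_ciInf fun ⟨t, ht⟩ => le_ciInf fun ⟨V, hV⟩ => ?_)
  have hB ω := isHermitian_conjTranspose_mul_mul V (hX ω)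
  rw [neg_mul, Real.exp_neg]
  refine measureReal_le_inv_mul_integral (ae_of_all _ fun ω => (hB ω).re_trace_exp_smul_nonneg t)
    (hInt t ht V hV) (Real.exp_pos _) fun ω hω => ?_
  obtain ⟨j, hj⟩ := (hX ω).exists_eigvalDesc_le_eigenvalues_conjTranspose_mul_mul hk1 hkn hV
    (by omega)
  calc Real.exp (t * θ) ≤ Real.exp (t * (hB ω).eigenvalues j) := by
        gcongr
        exact hω.trans hj
    _ ≤ _ := (hB ω).exp_mul_eigenvalues_le_re_trace_exp_smul t j
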